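/- arXiv:1307.4288 — 2 statements merged into one kernel-verified Lean document; each statement's English description precedes it below -/
import Mathlib

section
/- Let (A, m) be a local noetherian ring. Every bounded cochain complex of finite free A-modules is quasi-isomorphic to a minimal bounded complex of finite free A-modules. -/
open CategoryTheory Limits

universe u

section Defs

variable {A : Type u} [Ring A]

/-- The degreewise direct sum of a finite family of cochain complexes of modules. -/
noncomputable def sumComplex {s : ℕ} (G : Fin s → CochainComplex (ModuleCat.{u} A) ℤ) :
    CochainComplex (ModuleCat.{u} A) ℤ where
  X i := ModuleCat.of A (∀ j, (G j).X i)
  d i i' := ModuleCat.ofHom (LinearMap.pi fun j => ((G j).d i i').hom.comp (LinearMap.proj j))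
  shape i i' h := by
    apply ModuleCat.hom_ext
    refine LinearMap.ext fun v => funext fun j => ?_
    simp [(G j).shape i i' h]
    rfl
  d_comp_d' i i' i'' _ _ := by
    apply ModuleCat.hom_ext
    refine LinearMap.ext fun v => funext fun j => ?_
    simp
    exact (congrArg (fun f => f.hom (v j)) ((G j).d_comp_d i i' i'')).trans rfl

/-- A complex is supported in the interval `[a, b]` if it has trivial terms outside. -/
def SupportedIn (K : CochainComplex (ModuleCat.{u} A) ℤ) (a b : ℤ) : Prop :=
  ∀ i : ℤ, (i < a ∨ b < i) → IsZero (K.X i)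

/-- A perfect complex: a bounded cochain complex of finitely generated projective modules. -/
def IsPerfect (K : CochainComplex (ModuleCat.{u} A) ℤ) : Prop :=
  (∀ i : ℤ, Module.Finite A (K.X i) ∧ Module.Projective A (K.X i)) ∧
    ∃ a b : ℤ, SupportedIn K a b

/-- The complex has length at most `r`, i.e. it is supported in an interval `[a, a + r]`. -/
def LengthLE (K : CochainComplex (ModuleCat.{u} A) ℤ) (r : ℕ) : Prop :=
  ∃ a : ℤ, SupportedIn K a (a + r)

/-- Two complexes are quasi-isomorphic (isomorphic in the derived category) iff they are
linked by a roof of quasi-isomorphisms. -/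
def QuasiIsomorphic (K L : CochainComplex (ModuleCat.{u} A) ℤ) : Prop :=
  ∃ (Z : CochainComplex (ModuleCat.{u} A) ℤ) (f : Z ⟶ K) (g : Z ⟶ L),
    QuasiIso f ∧ QuasiIso g

end Defs

/-- A ring is strongly `r`-regular if every perfect complex is quasi-isomorphic to a finite
direct sum of perfect complexes of length at most `r`. -/
def IsStronglyRegularOfOrder (A : Type u) [Ring A] (r : ℕ) : Prop :=
  ∀ K : CochainComplex (ModuleCat.{u} A) ℤ, IsPerfect K →
    ∃ (s : ℕ) (G : Fin s → CochainComplex (ModuleCat.{u} A) ℤ),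
      (∀ j, IsPerfect (G j) ∧ LengthLE (G j) r) ∧ QuasiIsomorphic K (sumComplex G)

/-- A ring is strongly regular if it is strongly `r`-regular for some `r ≥ 0`. -/
def IsStronglyRegular (A : Type u) [Ring A] : Prop :=
  ∃ r : ℕ, IsStronglyRegularOfOrder A r

/-- A bounded complex of finite free modules over a local ring is minimal if its
differentials map into `m` times the target. -/
def IsMinimal {A : Type u} [CommRing A] [IsLocalRing A]
    (P : CochainComplex (ModuleCat.{u} A) ℤ) : Prop :=
  ∀ (i j : ℤ) (v : P.X i),
    P.d i j v ∈ (IsLocalRing.maximalIdeal A) • (⊤ : Submodule A (P.X j))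

/-- A bounded complex of finite free modules. -/
def IsFiniteFreeBounded {A : Type u} [Ring A] (P : CochainComplex (ModuleCat.{u} A) ℤ) : Prop :=
  (∀ i : ℤ, Module.Finite A (P.X i) ∧ Module.Free A (P.X i)) ∧ ∃ a b : ℤ, SupportedIn P a b

/-!
If `P` is not minimal, some differential has a unit entry: `φ (d v) = 1` for some `v ∈ P^i` and
`φ : P^{i+1} → A`. Extended by zero to a map of degree `-1`, `H = v ⊗ φ : P^{i+1} → P^i`
satisfies `H H = 0` and `H d H = H`, so `e = d H + H d` is a null-homotopic idempotent chain
endomorphism of `P`. Its kernel is a subcomplex homotopy equivalent to `P` (with homotopy inverse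
`1 - e`); degreewise it is a direct summand of a finite free module over a local ring, hence
finite free, and its total rank is smaller because `e v = v ≠ 0`. Induction on the total rank
ends at a minimal complex.
-/

namespace Submodule

section Ring

variable {R M : Type*} [Ring R] [AddCommGroup M] [Module R M] {p q : Submodule R M}

lemma finite_of_isCompl [Module.Finite R M] (h : IsCompl p q) : Module.Finite R p :=
  Module.Finite.of_surjective _ (projectionOnto_surjective h)

lemma projective_of_isCompl [Module.Projective R M] (h : IsCompl p q) :
    Module.Projective R p :=
  Module.Projective.of_split p.subtype _ (projectionOnto_comp_subtype h)

end Ring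

section IsLocalRing

variable {R M : Type*} [CommRing R] [IsLocalRing R] [AddCommGroup M] [Module R M]
  [Module.Finite R M] [Module.Free R M] {p q : Submodule R M}

lemma free_of_isCompl (h : IsCompl p q) : Module.Free R p :=
  have := finite_of_isCompl h
  have := projective_of_isCompl h
  have := Module.finitePresentation_of_projective R p
  Module.free_of_flat_of_isLocalRing

lemma finrank_add_finrank_of_isCompl (h : IsCompl p q) :
    Module.finrank R p + Module.finrank R q = Module.finrank R M := by
  have := finite_of_isCompl h
  have := finite_of_isCompl h.symm
  have := free_of_isCompl h
  have := free_of_isCompl h.symm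
  rw [← Module.finrank_prod, (prodEquivOfIsCompl p q h).finrank_eq]

lemma finrank_lt_of_isCompl (h : IsCompl p q) (hq : q ≠ ⊥) :
    Module.finrank R p < Module.finrank R M := by
  have := finite_of_isCompl h.symm
  have := free_of_isCompl h.symm
  have := nontrivial_iff_ne_bot.mpr hq
  have := (Module.finrank_pos_iff_of_free R q).mpr this
  have := finrank_add_finrank_of_isCompl h
  omega

end IsLocalRing

end Submodule

lemma IsLocalRing.exists_linearMap_apply_eq_one {R M : Type*} [CommRing R] [IsLocalRing R]
    [AddCommGroup M] [Module R M] [Module.Free R M] {x : M}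
    (hx : x ∉ maximalIdeal R • (⊤ : Submodule R M)) : ∃ φ : M →ₗ[R] R, φ x = 1 := by
  let b := Module.Free.chooseBasis R M
  obtain ⟨k, hk⟩ : ∃ k, b.repr x k ∉ maximalIdeal R := by
    by_contra! hall
    refine hx (b.linearCombination_repr x ▸ Submodule.sum_mem _ fun k _ => ?_)
    exact Submodule.smul_mem_smul (hall k) Submodule.mem_top
  obtain ⟨w, hw⟩ := notMem_maximalIdeal.mp hk
  refine ⟨(↑w⁻¹ : R) • b.coord k, ?_⟩
  simp [← hw]

namespace HomologicalComplex

variable {R : Type u} [Ring R] {ι : Type*} {c : ComplexShape ι}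
  {P Q : HomologicalComplex (ModuleCat.{u} R) c}

noncomputable def kerComplex (f : P ⟶ Q) : HomologicalComplex (ModuleCat.{u} R) c where
  X p := ModuleCat.of R (LinearMap.ker (f.f p).hom)
  d p q := ModuleCat.ofHom <| (P.d p q).hom.restrict fun x (hx : f.f p x = 0) => by
    change f.f q (P.d p q x) = 0
    rw [← ModuleCat.comp_apply, ← f.comm, ModuleCat.comp_apply, hx, map_zero]
  shape p q h := by
    ext ⟨x, _⟩
    exact congrArg (fun g : P.X p ⟶ P.X q => g x) (P.shape p q h)
  d_comp_d' p q r _ _ := by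
    ext ⟨x, _⟩
    exact congrArg (fun g : P.X p ⟶ P.X r => g x) (P.d_comp_d p q r)

noncomputable def kerComplexι (f : P ⟶ Q) : kerComplex f ⟶ P where
  f p := ModuleCat.ofHom (LinearMap.ker (f.f p).hom).subtype

section Idempotent

variable {e : P ⟶ P} (he : e ≫ e = e)

include he

lemma isIdempotentElem_hom_f (p : ι) : IsIdempotentElem (e.f p).hom := by
  change (e.f p ≫ e.f p).hom = _
  rw [← comp_f, he]

lemma isCompl_ker_range_hom_f (p : ι) :
    IsCompl (LinearMap.ker (e.f p).hom) (LinearMap.range (e.f p).hom) :=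
  (LinearMap.IsIdempotentElem.isCompl (isIdempotentElem_hom_f he p)).symm

lemma sub_apply_self_mem_ker (p : ι) (x : P.X p) : x - e.f p x ∈ LinearMap.ker (e.f p).hom :=
  LinearMap.IsIdempotentElem.ker_eq_range (isIdempotentElem_hom_f he p) ▸ ⟨x, rfl⟩

noncomputable def kerComplexRetraction : P ⟶ kerComplex e where
  f p := ModuleCat.ofHom <|
    LinearMap.codRestrict _ (LinearMap.id - (e.f p).hom) (sub_apply_self_mem_ker he p)
  comm' p q _ := by
    ext x
    apply Subtype.ext
    change P.d p q (x - e.f p x) = P.d p q x - e.f q (P.d p q x)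
    rw [map_sub, ← ModuleCat.comp_apply, ← ModuleCat.comp_apply, e.comm]

lemma kerComplexι_comp_retraction : kerComplexι e ≫ kerComplexRetraction he = 𝟙 _ := by
  ext p ⟨x, hx⟩
  apply Subtype.ext
  change x - e.f p x = x
  rw [show e.f p x = 0 from hx, sub_zero]

lemma kerComplexRetraction_comp_ι : kerComplexRetraction he ≫ kerComplexι e = 𝟙 P - e := by
  ext p x
  rfl

noncomputable def kerComplexHomotopyEquiv (h : Homotopy e 0) :
    HomotopyEquiv (kerComplex e) P where
  hom := kerComplexι e
  inv := kerComplexRetraction he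
  homotopyHomInvId := Homotopy.ofEq (kerComplexι_comp_retraction he)
  homotopyInvHomId := Homotopy.equivSubZero.symm <|
    (Homotopy.ofEq (by rw [kerComplexRetraction_comp_ι]; abel)).trans
      (Homotopy.equivSubZero h.symm)

end Idempotent

end HomologicalComplex

lemma Homotopy.nullHomotopicMap_comp_self {C : Type*} [Category C] [Preadditive C] {ι : Type*}
    {c : ComplexShape ι} {P : HomologicalComplex C c} (hom : ∀ p q, P.X p ⟶ P.X q)
    (hom_comp_hom : ∀ p q r, hom p q ≫ hom q r = 0)
    (hom_comp_d_comp_hom : ∀ p q, hom p q ≫ P.d q p ≫ hom p q = hom p q) :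
    nullHomotopicMap hom ≫ nullHomotopicMap hom = nullHomotopicMap hom := by
  ext k
  simp only [HomologicalComplex.comp_f, nullHomotopicMap, dNext, prevD, AddMonoidHom.mk'_apply,
    Preadditive.add_comp, Preadditive.comp_add, Category.assoc,
    reassoc_of% hom_comp_d_comp_hom, reassoc_of% hom_comp_hom,
    zero_comp, comp_zero, HomologicalComplex.d_comp_d_assoc, hom_comp_d_comp_hom]
  abel

namespace CochainComplex

variable {C : Type*} [Category C] [Preadditive C] {P : CochainComplex C ℤ} {i : ℤ}

noncomputable def homConcentrated (H : P.X (i + 1) ⟶ P.X i) (p q : ℤ) : P.X p ⟶ P.X q :=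
  if h : p = i + 1 ∧ q = i then eqToHom (by rw [h.1]) ≫ H ≫ eqToHom (by rw [h.2]) else 0

variable (H : P.X (i + 1) ⟶ P.X i)

lemma homConcentrated_self : homConcentrated H (i + 1) i = H := by
  simp [homConcentrated]

lemma homConcentrated_of_ne_left {p : ℤ} (h : p ≠ i + 1) (q : ℤ) :
    homConcentrated H p q = 0 := by
  simp [homConcentrated, h]

lemma homConcentrated_eq_zero {p q : ℤ} (h : ¬ (ComplexShape.up ℤ).Rel q p) :
    homConcentrated H p q = 0 := by
  simp only [ComplexShape.up_Rel] at h
  rw [homConcentrated, dif_neg (by omega)]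

lemma homConcentrated_comp_homConcentrated (p q r : ℤ) :
    homConcentrated H p q ≫ homConcentrated H q r = 0 := by
  by_cases h : q = i + 1
  · rw [homConcentrated, dif_neg (by omega), zero_comp]
  · rw [homConcentrated_of_ne_left H h, comp_zero]

lemma homConcentrated_comp_d_comp (hH : H ≫ P.d i (i + 1) ≫ H = H) (p q : ℤ) :
    homConcentrated H p q ≫ P.d q p ≫ homConcentrated H p q = homConcentrated H p q := by
  by_cases h : p = i + 1 ∧ q = i
  · obtain ⟨rfl, rfl⟩ := h
    rw [homConcentrated_self, hH]
  · simp [homConcentrated, h]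

lemma nullHomotopicMap_homConcentrated_comp_self (hH : H ≫ P.d i (i + 1) ≫ H = H) :
    Homotopy.nullHomotopicMap (homConcentrated H) ≫ Homotopy.nullHomotopicMap (homConcentrated H) =
      Homotopy.nullHomotopicMap (homConcentrated H) :=
  Homotopy.nullHomotopicMap_comp_self _ (homConcentrated_comp_homConcentrated H)
    (homConcentrated_comp_d_comp H hH)

lemma nullHomotopicMap_homConcentrated_f_self :
    (Homotopy.nullHomotopicMap (homConcentrated H)).f i = P.d i (i + 1) ≫ H := by
  rw [Homotopy.nullHomotopicMap_f (c := ComplexShape.up ℤ) (k₂ := i - 1) (by simp) rfl,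
    homConcentrated_self, homConcentrated_of_ne_left H (by omega), zero_comp, add_zero]

end CochainComplex

lemma SupportedIn.kerComplex {A : Type u} [Ring A] {P Q : CochainComplex (ModuleCat.{u} A) ℤ}
    {a b : ℤ} (hP : SupportedIn P a b) (f : P ⟶ Q) :
    SupportedIn (HomologicalComplex.kerComplex f) a b := fun p hp =>
  have := ModuleCat.isZero_iff_subsingleton.mp (hP p hp)
  ModuleCat.isZero_of_subsingleton (ModuleCat.of A (LinearMap.ker (f.f p).hom))

section IsLocalRing

open HomologicalComplex CochainComplex Module

variable {A : Type u} [CommRing A] [IsLocalRing A]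

section FiniteFree

variable {P : CochainComplex (ModuleCat.{u} A) ℤ} {e : P ⟶ P} (he : e ≫ e = e)
  (hP : ∀ p, Module.Finite A (P.X p) ∧ Module.Free A (P.X p))

include he hP

lemma finite_free_kerComplex_X (p : ℤ) :
    Module.Finite A ((kerComplex e).X p) ∧ Module.Free A ((kerComplex e).X p) :=
  have := (hP p).1
  have := (hP p).2
  ⟨Submodule.finite_of_isCompl (isCompl_ker_range_hom_f he p),
    Submodule.free_of_isCompl (isCompl_ker_range_hom_f he p)⟩

lemma finrank_kerComplex_X_le (p : ℤ) : finrank A ((kerComplex e).X p) ≤ finrank A (P.X p) :=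
  have := (hP p).1
  have := (hP p).2
  (Submodule.finrank_add_finrank_of_isCompl (isCompl_ker_range_hom_f he p)).le.trans'
    (Nat.le_add_right _ _)

lemma finrank_kerComplex_X_lt {p : ℤ} {x : P.X p} (hx : e.f p x ≠ 0) :
    finrank A ((kerComplex e).X p) < finrank A (P.X p) :=
  have := (hP p).1
  have := (hP p).2
  Submodule.finrank_lt_of_isCompl (isCompl_ker_range_hom_f he p) <|
    (Submodule.ne_bot_iff _).mpr ⟨_, LinearMap.mem_range_self _ x, hx⟩

end FiniteFree

lemma exists_apply_d_eq_one_of_not_isMinimal {P : CochainComplex (ModuleCat.{u} A) ℤ}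
    (hP : ∀ p, Module.Free A (P.X p)) (hmin : ¬ IsMinimal P) :
    ∃ (i : ℤ) (v : P.X i) (φ : P.X (i + 1) →ₗ[A] A), φ (P.d i (i + 1) v) = 1 := by
  obtain ⟨i, j, v, hv⟩ : ∃ (i j : ℤ) (v : P.X i),
      P.d i j v ∉ IsLocalRing.maximalIdeal A • (⊤ : Submodule A (P.X j)) := by
    simpa [IsMinimal] using hmin
  obtain rfl : j = i + 1 := by
    by_contra hj
    rw [P.shape i j (by simp only [ComplexShape.up_Rel]; omega)] at hv
    exact hv (Submodule.zero_mem _)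
  exact ⟨i, v, IsLocalRing.exists_linearMap_apply_eq_one hv⟩

lemma exists_quasiIso_sum_finrank_lt_of_not_isMinimal {P : CochainComplex (ModuleCat.{u} A) ℤ}
    {a b : ℤ} (hP : ∀ p, Module.Finite A (P.X p) ∧ Module.Free A (P.X p))
    (hPab : SupportedIn P a b) (hmin : ¬ IsMinimal P) :
    ∃ (Q : CochainComplex (ModuleCat.{u} A) ℤ) (f : Q ⟶ P),
      (∀ p, Module.Finite A (Q.X p) ∧ Module.Free A (Q.X p)) ∧ SupportedIn Q a b ∧ QuasiIso f ∧
      ∑ p ∈ Finset.Icc a b, finrank A (Q.X p) < ∑ p ∈ Finset.Icc a b, finrank A (P.X p) := by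
  obtain ⟨i, v, φ, hφ⟩ := exists_apply_d_eq_one_of_not_isMinimal (fun p => (hP p).2) hmin
  have hv : v ≠ 0 := by
    rintro rfl
    simp at hφ
  let H : P.X (i + 1) ⟶ P.X i := ModuleCat.ofHom ((LinearMap.toSpanSingleton A _ v).comp φ)
  have hH : H ≫ P.d i (i + 1) ≫ H = H := by
    ext x
    change φ (P.d i (i + 1) (φ x • v)) • v = φ x • v
    rw [map_smul, map_smul, hφ, smul_eq_mul, mul_one]
  have he := nullHomotopicMap_homConcentrated_comp_self H hH
  have hev : (Homotopy.nullHomotopicMap (homConcentrated H)).f i v = v := by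
    rw [nullHomotopicMap_homConcentrated_f_self]
    change φ (P.d i (i + 1) v) • v = v
    rw [hφ, one_smul]
  have hi : i ∈ Finset.Icc a b := by
    by_contra hi
    have := ModuleCat.isZero_iff_subsingleton.mp (hPab i (by rw [Finset.mem_Icc] at hi; omega))
    exact hv (Subsingleton.elim v 0)
  refine ⟨kerComplex _, kerComplexι _, finite_free_kerComplex_X he hP, hPab.kerComplex _,
    (kerComplexHomotopyEquiv he
      (Homotopy.nullHomotopy _ fun _ _ => homConcentrated_eq_zero H)).quasiIso_hom,
    Finset.sum_lt_sum (fun p _ => finrank_kerComplex_X_le he hP p) ⟨i, hi, ?_⟩⟩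
  exact finrank_kerComplex_X_lt he hP (x := v) (by rwa [hev])

theorem exists_isMinimal_quasiIso {P : CochainComplex (ModuleCat.{u} A) ℤ} {a b : ℤ}
    (hP : ∀ p, Module.Finite A (P.X p) ∧ Module.Free A (P.X p)) (hPab : SupportedIn P a b) :
    ∃ (Q : CochainComplex (ModuleCat.{u} A) ℤ) (f : Q ⟶ P),
      (∀ p, Module.Finite A (Q.X p) ∧ Module.Free A (Q.X p)) ∧ SupportedIn Q a b ∧
      IsMinimal Q ∧ QuasiIso f := by
  by_cases hmin : IsMinimal P
  · exact ⟨P, 𝟙 P, hP, hPab, hmin, inferInstance⟩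
  obtain ⟨Q, f, hQ, hQab, hf, hlt⟩ := exists_quasiIso_sum_finrank_lt_of_not_isMinimal hP hPab hmin
  obtain ⟨M, g, hM, hMab, hMmin, hg⟩ := exists_isMinimal_quasiIso hQ hQab
  exact ⟨M, g ≫ f, hM, hMab, hMmin, inferInstance⟩
termination_by ∑ p ∈ Finset.Icc a b, finrank A (P.X p)

end IsLocalRing

theorem statement6_general (A : Type u) [CommRing A] [IsLocalRing A]
    (P : CochainComplex (ModuleCat.{u} A) ℤ) (hP : IsFiniteFreeBounded P) :
    ∃ Q : CochainComplex (ModuleCat.{u} A) ℤ,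
      IsFiniteFreeBounded Q ∧ IsMinimal Q ∧ QuasiIsomorphic P Q := by
  obtain ⟨hfree, a, b, hab⟩ := hP
  obtain ⟨Q, f, hQ, hQab, hmin, hf⟩ := exists_isMinimal_quasiIso hfree hab
  exact ⟨Q, ⟨hQ, a, b, hQab⟩, hmin, Q, f, 𝟙 Q, hf, inferInstance⟩

/-- Over a local noetherian ring, every bounded cochain complex of finite
free modules is quasi-isomorphic to a minimal bounded complex of finite free modules. -/
theorem statement6 (A : Type u) [CommRing A] [IsLocalRing A] [IsNoetherianRing A]
    (P : CochainComplex (ModuleCat.{u} A) ℤ) (hP : IsFiniteFreeBounded P) :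
    ∃ Q : CochainComplex (ModuleCat.{u} A) ℤ,
      IsFiniteFreeBounded Q ∧ IsMinimal Q ∧ QuasiIsomorphic P Q :=
  statement6_general A P hP
end

section
/- Let (A, m) be a local noetherian ring, let (x, y) be a regular sequence contained in m, let a = (x, y) be the ideal generated by x and y, and let M be the 2×2 matrix over A with rows (xy, −x²) and (y², −xy). Then right multiplication by M on A² sends A² into a²·A², and the induced map A²/a·A² → a²·A² / a³·A² is injective. -/
universe u

lemma sq_le' (A : Type u) [CommRing A] (x y : A) :
    Ideal.span {x, y} * Ideal.span {x, y} ≤ Ideal.span {x^2, x*y, y^2} := by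
  refine Submodule.mul_le.2 (fun a ha b hb => ?_)
  rw [Ideal.mem_span_pair] at ha hb
  obtain ⟨a1, a2, rfl⟩ := ha
  obtain ⟨b1, b2, rfl⟩ := hb
  have h1 : x^2 ∈ Ideal.span ({x^2, x*y, y^2} : Set A) := Ideal.subset_span (by simp)
  have h2 : x*y ∈ Ideal.span ({x^2, x*y, y^2} : Set A) := Ideal.subset_span (by simp)
  have h3 : y^2 ∈ Ideal.span ({x^2, x*y, y^2} : Set A) := Ideal.subset_span (by simp)
  have : (a1 * x + a2 * y) * (b1 * x + b2 * y)
      = (a1*b1) * x^2 + (a1*b2 + a2*b1) * (x*y) + (a2*b2) * y^2 := by ring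
  rw [this]
  exact add_mem (add_mem (Ideal.mul_mem_left _ _ h1) (Ideal.mul_mem_left _ _ h2))
    (Ideal.mul_mem_left _ _ h3)

lemma cube_le' (A : Type u) [CommRing A] (x y : A) :
    Ideal.span {x, y} ^ 3 ≤ Ideal.span {x^3, x^2*y, x*y^2, y^3} := by
  have h : Ideal.span ({x, y} : Set A) ^ 3
      = (Ideal.span {x, y} * Ideal.span {x, y}) * Ideal.span {x, y} := by ring
  rw [h]
  refine Submodule.mul_le.2 (fun a ha b hb => ?_)
  replace ha := sq_le' A x y ha
  rw [Ideal.mem_span_pair] at hb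
  obtain ⟨b1, b2, rfl⟩ := hb
  simp only [Ideal.mem_span_insert, Ideal.mem_span_singleton] at ha
  obtain ⟨c1, z1, ⟨c2, z2, ⟨c3, rfl⟩, rfl⟩, rfl⟩ := ha
  have g1 : x^3 ∈ Ideal.span ({x^3, x^2*y, x*y^2, y^3} : Set A) := Ideal.subset_span (by simp)
  have g2 : x^2*y ∈ Ideal.span ({x^3, x^2*y, x*y^2, y^3} : Set A) := Ideal.subset_span (by simp)
  have g3 : x*y^2 ∈ Ideal.span ({x^3, x^2*y, x*y^2, y^3} : Set A) := Ideal.subset_span (by simp)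
  have g4 : y^3 ∈ Ideal.span ({x^3, x^2*y, x*y^2, y^3} : Set A) := Ideal.subset_span (by simp)
  have : (c1 * x ^ 2 + (c2 * (x * y) + y ^ 2 * c3)) * (b1 * x + b2 * y)
      = (c1*b1) * x^3 + (c1*b2 + c2*b1) * (x^2*y) + (c2*b2 + c3*b1) * (x*y^2)
        + (c3*b2) * y^3 := by ring
  rw [this]
  exact add_mem (add_mem (add_mem (Ideal.mul_mem_left _ _ g1) (Ideal.mul_mem_left _ _ g2))
    (Ideal.mul_mem_left _ _ g3)) (Ideal.mul_mem_left _ _ g4)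

/-- Let `(A, m)` be a local noetherian ring, `(x, y)` a regular sequence in
`m`, `a = (x, y)` and `M` the matrix with rows `(xy, -x²)` and `(y², -xy)`. Then right
multiplication of row vectors by `M` sends `A²` into `a²·A²`, and the induced map
`A²/a·A² → a²·A²/a³·A²` is injective. -/
theorem statement13 (A : Type u) [CommRing A] [IsLocalRing A] [IsNoetherianRing A]
    (x y : A) (hx : x ∈ IsLocalRing.maximalIdeal A) (hy : y ∈ IsLocalRing.maximalIdeal A)
    (hxreg : ∀ a : A, x * a = 0 → a = 0)
    (hyreg : ∀ a : A, y * a ∈ Ideal.span {x} → a ∈ Ideal.span {x}) :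
    (∀ (v : Fin 2 → A) (j : Fin 2),
        Matrix.vecMul v !![x * y, -(x ^ 2); y ^ 2, -(x * y)] j ∈ Ideal.span {x, y} ^ 2) ∧
    (∀ v : Fin 2 → A,
        (∀ j : Fin 2,
          Matrix.vecMul v !![x * y, -(x ^ 2); y ^ 2, -(x * y)] j ∈ Ideal.span {x, y} ^ 3) →
        ∀ j : Fin 2, v j ∈ Ideal.span {x, y}) := by
  have hxm : x ∈ Ideal.span ({x, y} : Set A) := Ideal.subset_span (by simp)
  have hym : y ∈ Ideal.span ({x, y} : Set A) := Ideal.subset_span (by simp)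
  constructor
  · intro v j
    have hw : v 0 * x + v 1 * y ∈ Ideal.span ({x, y} : Set A) :=
      add_mem (Ideal.mul_mem_left _ _ hxm) (Ideal.mul_mem_left _ _ hym)
    fin_cases j
    · show Matrix.vecMul v !![x * y, -(x ^ 2); y ^ 2, -(x * y)] 0 ∈ _
      have : Matrix.vecMul v !![x * y, -(x ^ 2); y ^ 2, -(x * y)] 0
          = y * (v 0 * x + v 1 * y) := by
        simp [Matrix.vecMul, dotProduct, Fin.sum_univ_two]; ring
      rw [this, sq]
      exact Ideal.mul_mem_mul hym hw
    · show Matrix.vecMul v !![x * y, -(x ^ 2); y ^ 2, -(x * y)] 1 ∈ _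
      have : Matrix.vecMul v !![x * y, -(x ^ 2); y ^ 2, -(x * y)] 1
          = -(x * (v 0 * x + v 1 * y)) := by
        simp [Matrix.vecMul, dotProduct, Fin.sum_univ_two]; ring
      rw [this, sq]
      exact neg_mem (Ideal.mul_mem_mul hxm hw)
  · intro v hv
    have h1 := hv 1
    have hxw : x * (v 0 * x + v 1 * y) ∈ Ideal.span ({x, y} : Set A) ^ 3 := by
      have : Matrix.vecMul v !![x * y, -(x ^ 2); y ^ 2, -(x * y)] 1
          = -(x * (v 0 * x + v 1 * y)) := by
        simp [Matrix.vecMul, dotProduct, Fin.sum_univ_two]; ring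
      rw [this] at h1
      simpa using neg_mem h1
    replace hxw := cube_le' A x y hxw
    simp only [Ideal.mem_span_insert, Ideal.mem_span_singleton] at hxw
    obtain ⟨a, z1, ⟨b, z2, ⟨c, z3, ⟨d, rfl⟩, rfl⟩, rfl⟩, heq⟩ := hxw
    -- d ∈ (x)
    have hd : d ∈ Ideal.span ({x} : Set A) := by
      apply hyreg; apply hyreg; apply hyreg
      rw [Ideal.mem_span_singleton]
      exact ⟨v 0 * x + v 1 * y - a * x^2 - b * (x*y) - c * y^2, by linear_combination -heq⟩
    rw [Ideal.mem_span_singleton] at hd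
    obtain ⟨e, rfl⟩ := hd
    have hw2 : v 0 * x + v 1 * y = a * x^2 + b * (x*y) + c * y^2 + e * y^3 := by
      have h0 : x * ((v 0 * x + v 1 * y) - (a * x^2 + b * (x*y) + c * y^2 + e * y^3)) = 0 := by
        linear_combination heq
      have h0' := hxreg _ h0
      linear_combination h0'
    -- v 1 ∈ (x, y)
    have hs : c * y + e * y^2 - v 1 ∈ Ideal.span ({x} : Set A) := by
      apply hyreg
      rw [Ideal.mem_span_singleton]
      exact ⟨v 0 - a * x - b * y, by linear_combination -hw2⟩
    rw [Ideal.mem_span_singleton] at hs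
    obtain ⟨s, hs⟩ := hs
    have hv1 : v 1 ∈ Ideal.span ({x, y} : Set A) := by
      rw [Ideal.mem_span_pair]
      exact ⟨-s, c + e * y, by linear_combination hs⟩
    have hv0 : v 0 ∈ Ideal.span ({x, y} : Set A) := by
      have h0 : x * (v 0 - a * x - b * y - y * s) = 0 := by
        linear_combination hw2 + y * hs
      have h0' := hxreg _ h0
      rw [Ideal.mem_span_pair]
      exact ⟨a, b + s, by linear_combination -h0'⟩
    intro j
    fin_cases j
    · exact hv0
    · exact hv1
end
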